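/- Let 0 < a < b, let Φ : ℝ → ℝ be four times differentiable on the interval (ln a, ln b), and define Ψ : ℝ → ℝ by Ψ(r) = r² Φ(ln r) for r ∈ (a, b). Then Δ₁(Δ₁Ψ)(r) = 0 for all r ∈ (a, b) if and only if Φ⁽⁴⁾(s) + 4Φ⁽³⁾(s) + 2Φ''(s) − 4Φ'(s) − 3Φ(s) = 0 for all s ∈ (ln a, ln b). -/

import Mathlib

/-!
Write `Ψ(r) = r ^ m φ(log r)`. Since `r d/dr` becomes `d/ds` under `s = log r`, a direct
computation gives `Δₙ (r ^ m φ(log r)) = r ^ (m - 2) (φ'' + 2mφ' + (m² - n²)φ)(log r)`.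
With `m = 2`, `n = 1` this is `Δ₁Ψ = G(log r)` for `G = Φ'' + 4Φ' + 3Φ`, and with `m = 0`
it is `Δ₁(G ∘ log) = r⁻² (G'' - G)(log r)`, where `G'' - G` is the stated operator applied
to `Φ`.
-/

open Real Set Filter Topology

/-- The operator `(Δ_n Ψ)(r) = Ψ''(r) + Ψ'(r)/r − n² Ψ(r)/r²`. -/
noncomputable def DeltaOp (n : ℕ) (Ψ : ℝ → ℝ) : ℝ → ℝ :=
  fun r => deriv (deriv Ψ) r + deriv Ψ r / r - (n : ℝ) ^ 2 * Ψ r / r ^ 2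

theorem hasDerivAt_zpow_mul_comp_log {m : ℤ} {φ : ℝ → ℝ} {φ'₀ r : ℝ} (hr : r ≠ 0)
    (hφ : HasDerivAt φ φ'₀ (log r)) :
    HasDerivAt (fun x => x ^ m * φ (log x)) (r ^ (m - 1) * (m * φ (log r) + φ'₀)) r := by
  refine ((hasDerivAt_zpow m r (Or.inl hr)).mul (hφ.comp r (hasDerivAt_log hr))).congr_deriv ?_
  rw [Function.comp_apply, show r ^ m = r ^ (m - 1) * r by rw [← zpow_add_one₀ hr, sub_add_cancel]]
  field_simp

theorem deltaOp_eq_zpow_mul_comp_log {n : ℕ} {m : ℤ} {φ φ' φ'' Ψ : ℝ → ℝ} {r : ℝ}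
    (hr : r ≠ 0) (hφ : ∀ᶠ s in 𝓝 (log r), HasDerivAt φ (φ' s) s)
    (hφ' : HasDerivAt φ' (φ'' (log r)) (log r))
    (hΨ : Ψ =ᶠ[𝓝 r] fun x => x ^ m * φ (log x)) :
    DeltaOp n Ψ r =
      r ^ (m - 2) * (φ'' (log r) + 2 * m * φ' (log r) + (m ^ 2 - n ^ 2) * φ (log r)) := by
  have hφ_near : ∀ᶠ x in 𝓝 r, HasDerivAt φ (φ' (log x)) (log x) :=
    (continuousAt_log hr).eventually hφ
  have hΨ' : deriv Ψ =ᶠ[𝓝 r] fun x => x ^ (m - 1) * (m * φ (log x) + φ' (log x)) := by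
    filter_upwards [hΨ.eventuallyEq_nhds, hφ_near, eventually_ne_nhds hr] with x hΨx hφx hx
    rw [hΨx.deriv_eq]
    exact (hasDerivAt_zpow_mul_comp_log hx hφx).deriv
  have hΨ'' := (hasDerivAt_zpow_mul_comp_log (m := m - 1) hr
    ((hφ.self_of_nhds.const_mul (m : ℝ)).add hφ')).congr_of_eventuallyEq hΨ'
  rw [DeltaOp, hΨ''.deriv, hΨ'.self_of_nhds, hΨ.self_of_nhds]
  simp only [Pi.add_apply]
  rw [show r ^ m = r ^ (m - 2) * r ^ 2 by rw [← zpow_natCast, ← zpow_add₀ hr]; ring_nf,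
    show r ^ (m - 1) = r ^ (m - 2) * r by rw [← zpow_add_one₀ hr]; ring_nf,
    show m - 1 - 1 = m - 2 by ring]
  push_cast
  field_simp
  ring

theorem eqOn_deltaOp_zpow_mul_comp_log {n : ℕ} {m : ℤ} {φ φ' φ'' Ψ : ℝ → ℝ} {U V : Set ℝ}
    (hU : IsOpen U) (hU0 : (0 : ℝ) ∉ U) (hV : IsOpen V) (hUV : MapsTo log U V)
    (hφ : ∀ s ∈ V, HasDerivAt φ (φ' s) s) (hφ' : ∀ s ∈ V, HasDerivAt φ' (φ'' s) s)
    (hΨ : EqOn Ψ (fun x => x ^ m * φ (log x)) U) :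
    EqOn (DeltaOp n Ψ)
      (fun r => r ^ (m - 2) * (φ'' (log r) + 2 * m * φ' (log r) + (m ^ 2 - n ^ 2) * φ (log r)))
      U := fun _ hr =>
  deltaOp_eq_zpow_mul_comp_log (ne_of_mem_of_not_mem hr hU0)
    (eventually_of_mem (hV.mem_nhds (hUV hr)) hφ) (hφ' _ (hUV hr))
    (eventually_of_mem (hU.mem_nhds hr) hΨ)

theorem hasDerivAt_iteratedDeriv {f : ℝ → ℝ} {k : ℕ} {s : ℝ}
    (h : DifferentiableAt ℝ (iteratedDeriv k f) s) :
    HasDerivAt (iteratedDeriv k f) (iteratedDeriv (k + 1) f s) s := by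
  rw [iteratedDeriv_succ]
  exact h.hasDerivAt

theorem biharmonic_iff_constant_coefficients (a b : ℝ) (ha : 0 < a) (hab : a < b)
    (Φ Ψ : ℝ → ℝ)
    (hΦ : ∀ s ∈ Set.Ioo (Real.log a) (Real.log b), ∀ k : ℕ, k ≤ 3 →
      DifferentiableAt ℝ (iteratedDeriv k Φ) s)
    (hΨ : ∀ r ∈ Set.Ioo a b, Ψ r = r ^ 2 * Φ (Real.log r)) :
    (∀ r ∈ Set.Ioo a b, DeltaOp 1 (DeltaOp 1 Ψ) r = 0) ↔
    (∀ s ∈ Set.Ioo (Real.log a) (Real.log b),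
      iteratedDeriv 4 Φ s + 4 * iteratedDeriv 3 Φ s + 2 * iteratedDeriv 2 Φ s
        - 4 * deriv Φ s - 3 * Φ s = 0) := by
  have hlog : log '' Ioo a b = Ioo (log a) (log b) := image_log_Ioo ha hab.le
  have hlog_maps : MapsTo log (Ioo a b) (Ioo (log a) (log b)) := hlog ▸ mapsTo_image log _
  have h0 : (0 : ℝ) ∉ Ioo a b := fun h => (ha.trans h.1).false
  have hD : ∀ k ≤ 3, ∀ s ∈ Ioo (log a) (log b),
      HasDerivAt (iteratedDeriv k Φ) (iteratedDeriv (k + 1) Φ s) s :=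
    fun k hk s hs => hasDerivAt_iteratedDeriv (hΦ s hs k hk)
  set G := fun s => iteratedDeriv 2 Φ s + 4 * iteratedDeriv 1 Φ s + 3 * iteratedDeriv 0 Φ s
  set H := fun s => iteratedDeriv 3 Φ s + 4 * iteratedDeriv 2 Φ s + 3 * iteratedDeriv 1 Φ s
  have hG : ∀ s ∈ Ioo (log a) (log b), HasDerivAt G (H s) s := fun s hs =>
    ((hD 2 (by norm_num) s hs).add ((hD 1 (by norm_num) s hs).const_mul 4)).add
      ((hD 0 (by norm_num) s hs).const_mul 3)
  have hH : ∀ s ∈ Ioo (log a) (log b), HasDerivAt H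
      (iteratedDeriv 4 Φ s + 4 * iteratedDeriv 3 Φ s + 3 * iteratedDeriv 2 Φ s) s := fun s hs =>
    ((hD 3 le_rfl s hs).add ((hD 2 (by norm_num) s hs).const_mul 4)).add
      ((hD 1 (by norm_num) s hs).const_mul 3)
  have hΔΨ : EqOn (DeltaOp 1 Ψ) (fun r => r ^ (0 : ℤ) * G (log r)) (Ioo a b) := by
    refine (eqOn_deltaOp_zpow_mul_comp_log (m := 2) isOpen_Ioo h0 isOpen_Ioo hlog_maps
      (hD 0 (by norm_num)) (hD 1 (by norm_num)) fun x hx => ?_).trans fun r _ => ?_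
    · simp only [hΨ x hx, iteratedDeriv_zero, zpow_ofNat]
    · simp only [G]
      norm_num
  have hΔΔΨ := eqOn_deltaOp_zpow_mul_comp_log (n := 1) isOpen_Ioo h0 isOpen_Ioo hlog_maps hG hH hΔΨ
  rw [← hlog, forall_mem_image]
  refine forall₂_congr fun r hr => ?_
  rw [hΔΔΨ hr, mul_eq_zero_iff_left (zpow_ne_zero _ (ha.trans hr.1).ne')]
  simp only [G, iteratedDeriv_zero, iteratedDeriv_one, Int.cast_zero, Nat.cast_one]
  rw [iff_iff_eq]
  congr 1
  ring
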